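/- If B₁ ⊆ B₂ ⊆ … is an increasing sequence of Borel subsets of ℙ^n and B := ∪_n B_n, then κ(B) = lim_{n→∞} κ(B_n) = sup_n κ(B_n). -/

import Mathlib

open MeasureTheory Filter Topology ENNReal

noncomputable section

/-- Complex projective space ℙⁿ, the projectivization of ℂ^{n+1}. -/
abbrev Pn (n : ℕ) : Type := Projectivization ℂ (EuclideanSpace ℂ (Fin (n + 1)))

instance (n : ℕ) : TopologicalSpace (Pn n) := instTopologicalSpaceQuotient
instance (n : ℕ) : MeasurableSpace (Pn n) := borel _
instance (n : ℕ) : BorelSpace (Pn n) := ⟨rfl⟩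

variable {n : ℕ}

/-- The quantity |ζ∧η| / (|ζ||η|) ∈ [0,1], computed on (arbitrary) representatives,
where |ζ∧η|² = |ζ|²|η|² − |⟨ζ,η⟩|². -/
def pratio (x y : Pn n) : ℝ :=
  Real.sqrt (‖x.rep‖ ^ 2 * ‖y.rep‖ ^ 2 - ‖(inner ℂ x.rep y.rep : ℂ)‖ ^ 2) /
    (‖x.rep‖ * ‖y.rep‖)

/-- −G(ζ,η) ∈ [0,+∞], where G(ζ,η) = log (|ζ∧η| / (|ζ||η|)) is the projective
logarithmic kernel. -/
def negG (x y : Pn n) : ℝ≥0∞ :=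
  if pratio x y = 0 then ∞ else ENNReal.ofReal (-Real.log (pratio x y))

/-- The projective logarithmic potential G_μ(ζ) = ∫ G(ζ,η) dμ(η) ∈ [−∞,0]. -/
def potential (μ : Measure (Pn n)) (x : Pn n) : EReal :=
  -((∫⁻ y, negG x y ∂μ : ℝ≥0∞) : EReal)

/-- The mutual projective logarithmic energy I(μ,ν) = −∬ G(ζ,η) dμ(η) dν(ζ) ∈ [0,+∞]. -/
def mutEnergy (μ ν : Measure (Pn n)) : ℝ≥0∞ :=
  ∫⁻ x, ∫⁻ y, negG x y ∂μ ∂ν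

/-- The projective logarithmic energy I(μ) = −∬ G(ζ,η) dμ(η) dμ(ζ) ∈ [0,+∞]. -/
def energy (μ : Measure (Pn n)) : ℝ≥0∞ := mutEnergy μ μ

/-- The (closed) support of a Borel measure. -/
def msupport (μ : Measure (Pn n)) : Set (Pn n) :=
  {x | ∀ U : Set (Pn n), IsOpen U → x ∈ U → μ U ≠ 0}

/-- The Robin constant γ(E) = inf { I(μ) : μ probability measure, supp μ ⊆ E }. -/
def robin (E : Set (Pn n)) : ℝ≥0∞ :=
  ⨅ (μ : Measure (Pn n)) (_ : IsProbabilityMeasure μ) (_ : msupport μ ⊆ E), energy μ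

/-- The projective logarithmic capacity κ(E) = e^{−γ(E)}. -/
def kappa (E : Set (Pn n)) : ℝ≥0∞ := EReal.exp (-(robin E : EReal))

/-- A set is κ-polar if every probability measure supported in it has infinite energy. -/
def IsPolar (E : Set (Pn n)) : Prop :=
  ∀ μ : Measure (Pn n), IsProbabilityMeasure μ → msupport μ ⊆ E → energy μ = ∞

/-- Weak convergence of a sequence of measures: convergence of the integrals of all
continuous real functions. -/
def WeakTendsto (μs : ℕ → Measure (Pn n)) (μ : Measure (Pn n)) : Prop :=
  ∀ f : C(Pn n, ℝ), Tendsto (fun j => ∫ x, f x ∂(μs j)) atTop (𝓝 (∫ x, f x ∂μ))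

/-- The Fubini–Study geodesic distance, determined by sin (d(ζ,η)/√2) = |ζ∧η|/(|ζ||η|). -/
def gd (x y : Pn n) : ℝ := Real.sqrt 2 * Real.arcsin (pratio x y)

/-!
A point of `ℙⁿ` is determined by the orthogonal projection onto its line, and this gives a
continuous injection of the compact space `ℙⁿ` into a finite-dimensional normed space; hence
`ℙⁿ` is compact and metrizable, and finite Borel measures on it are weakly regular.

The Robin constant `γ` is antitone, so only `inf_m γ(B_m) ≤ γ(B)` needs proof. Let `μ` be a
probability measure supported in `B`. Since `μ(B_m) ↑ 1`, inner regularity gives closed sets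
`F ⊆ B_m` with `μ F` arbitrarily close to `1`. The normalised restriction `μ(· ∩ F) / μ F` is a
probability measure supported in `F ⊆ B_m` with energy at most `I(μ) / μ(F)²`, so
`γ(B_m) ⋅ μ(F)² ≤ I(μ)`, and letting `μ F → 1` gives `inf_m γ(B_m) ≤ I(μ)`. Thus `γ(B_m) ↓ γ(B)`,
and `κ = e^{-γ}` is continuous and monotone in `γ`.
-/

namespace Projectivization

open InnerProductSpace
open scoped LinearAlgebra.Projectivization

variable {𝕜 E : Type*} [RCLike 𝕜] [NormedAddCommGroup E] [InnerProductSpace 𝕜 E]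

-- The quotient topology, as for `Pn n`, so that the instances below apply to `Pn n`.
instance : TopologicalSpace (ℙ 𝕜 E) := instTopologicalSpaceQuotient

variable (𝕜) in
/-- The orthogonal projection onto the line spanned by `v`. -/
def lineProj (v : E) : E →L[𝕜] E := ((‖v‖ ^ 2)⁻¹ : 𝕜) • rankOne 𝕜 v v

lemma lineProj_smul {t : 𝕜} (ht : t ≠ 0) (v : E) : lineProj 𝕜 (t • v) = lineProj 𝕜 v := by
  have ht' : (‖t‖ : 𝕜) ≠ 0 := by simpa using ht
  ext w
  simp only [lineProj, smul_apply, rankOne_apply, inner_smul_left, smul_smul, norm_smul]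
  congr 1
  rw [mul_right_comm, RCLike.conj_mul]
  push_cast
  field_simp

lemma lineProj_apply_self {v : E} (hv : v ≠ 0) : lineProj 𝕜 v v = v := by
  have : (‖v‖ : 𝕜) ≠ 0 := by simpa using hv
  simp [lineProj, inner_self_eq_norm_sq_to_K, smul_smul, this]

lemma continuousOn_lineProj : ContinuousOn (lineProj 𝕜 : E → E →L[𝕜] E) {0}ᶜ := by
  have h1 : Continuous fun v : E => rankOne 𝕜 v v := by
    simp only [rankOne_def]
    fun_prop
  have h2 : ContinuousOn (fun v : E => ((‖v‖ ^ 2)⁻¹ : 𝕜)) {0}ᶜ :=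
    ContinuousOn.inv₀ (by fun_prop) fun v hv => by simpa using hv
  exact h2.smul h1.continuousOn

lemma exists_smul_eq_of_lineProj_eq {v w : E} (hv : v ≠ 0) (h : lineProj 𝕜 v = lineProj 𝕜 w) :
    ∃ t : 𝕜, t • w = v := by
  refine ⟨inner 𝕜 w v / (‖w‖ : 𝕜) ^ 2, ?_⟩
  calc _ = lineProj 𝕜 w v := by simp [lineProj, smul_smul, div_eq_inv_mul]
    _ = v := by rw [← h, lineProj_apply_self hv]

variable (𝕜 E) in
def toLineProj : ℙ 𝕜 E → E →L[𝕜] E :=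
  Projectivization.lift (fun v => lineProj 𝕜 (v : E)) fun v w t hvw => by
    have ht : t ≠ 0 := by rintro rfl; exact v.2 (by simpa using hvw)
    rw [hvw, lineProj_smul ht]

lemma continuous_toLineProj : Continuous (toLineProj 𝕜 E) :=
  continuous_coinduced_dom.mpr <|
    continuousOn_lineProj.comp_continuous continuous_subtype_val fun v => v.2

lemma injective_toLineProj : Function.Injective (toLineProj 𝕜 E) := by
  intro x y hxy
  induction x with | h v hv =>
  induction y with | h w hw =>
  exact (mk_eq_mk_iff' 𝕜 v w hv hw).mpr (exists_smul_eq_of_lineProj_eq hv hxy)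

instance [FiniteDimensional 𝕜 E] : CompactSpace (ℙ 𝕜 E) := by
  let f : Metric.sphere (0 : E) 1 → ℙ 𝕜 E := fun v =>
    mk 𝕜 (v : E) (ne_zero_of_mem_unit_sphere v)
  have hf : Continuous f := continuous_quotient_mk'.comp (continuous_subtype_val.subtype_mk _)
  have hsurj : Function.Surjective f := by
    intro x
    induction x with | h v hv =>
    refine ⟨⟨(‖v‖⁻¹ : 𝕜) • v, by simp [norm_smul, hv]⟩, ?_⟩
    exact (mk_eq_mk_iff' 𝕜 _ _ _ hv).mpr ⟨_, rfl⟩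
  have := FiniteDimensional.proper_rclike 𝕜 E
  exact ⟨by simpa [hsurj.range_eq] using isCompact_range hf⟩

lemma isClosedEmbedding_toLineProj [FiniteDimensional 𝕜 E] :
    Topology.IsClosedEmbedding (toLineProj 𝕜 E) :=
  continuous_toLineProj.isClosedEmbedding injective_toLineProj

instance [FiniteDimensional 𝕜 E] : T2Space (ℙ 𝕜 E) :=
  isClosedEmbedding_toLineProj.t2Space

instance [FiniteDimensional 𝕜 E] : TopologicalSpace.MetrizableSpace (ℙ 𝕜 E) :=
  isClosedEmbedding_toLineProj.isEmbedding.metrizableSpace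

instance [FiniteDimensional 𝕜 E] : SecondCountableTopology (ℙ 𝕜 E) :=
  haveI := FiniteDimensional.proper_rclike 𝕜 (E →L[𝕜] E)
  isClosedEmbedding_toLineProj.isEmbedding.secondCountableTopology

end Projectivization

lemma MeasureTheory.Measure.exists_isClosed_subset_lt_measure_iUnion {X : Type*}
    [TopologicalSpace X] [MeasurableSpace X] (μ : Measure X) [IsFiniteMeasure μ]
    [μ.WeaklyRegular] {B : ℕ → Set X} (hB : ∀ m, MeasurableSet (B m)) (hmono : Monotone B)
    {a : ℝ≥0∞} (ha : a < μ (⋃ m, B m)) : ∃ m F, IsClosed F ∧ F ⊆ B m ∧ a < μ F := by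
  rw [hmono.measure_iUnion] at ha
  obtain ⟨m, hm⟩ := lt_iSup_iff.mp ha
  obtain ⟨F, hFB, hF, haF⟩ := (hB m).exists_lt_isClosed_of_ne_top (measure_ne_top μ _) hm
  exact ⟨m, F, hF, hFB, haF⟩

section Capacity

open ProbabilityTheory

variable {n : ℕ}

lemma msupport_eq_support (μ : Measure (Pn n)) : msupport μ = μ.support := by
  ext x
  simp only [msupport, Measure.support_eq_forall_isOpen, Set.mem_ofPred_eq, pos_iff_ne_zero]
  exact forall_congr' fun U => ⟨fun h hx hU => h hU hx, fun h hU hx => h hx hU⟩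

lemma measure_eq_one_of_msupport_subset {μ : Measure (Pn n)} [IsProbabilityMeasure μ]
    {E : Set (Pn n)} (h : msupport μ ⊆ E) : μ E = 1 := by
  rw [msupport_eq_support] at h
  exact (measure_congr (ae_eq_univ.mpr (mem_of_superset Measure.support_mem_ae h))).trans
    measure_univ

lemma energy_mono {μ ν : Measure (Pn n)} (h : μ ≤ ν) : energy μ ≤ energy ν :=
  lintegral_mono' h fun _ => lintegral_mono' h le_rfl

lemma energy_smul {c : ℝ≥0∞} (hc : c ≠ ∞) (μ : Measure (Pn n)) :
    energy (c • μ) = c ^ 2 * energy μ := by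
  simp only [energy, mutEnergy, lintegral_smul_measure, smul_eq_mul]
  rw [lintegral_const_mul' _ _ hc]
  ring

lemma robin_le_energy {E : Set (Pn n)} (μ : Measure (Pn n)) [IsProbabilityMeasure μ]
    (h : msupport μ ⊆ E) : robin E ≤ energy μ :=
  iInf₂_le_of_le μ ‹_› (iInf_le _ h)

lemma robin_anti {E F : Set (Pn n)} (h : E ⊆ F) : robin F ≤ robin E :=
  le_iInf₂ fun μ _ => le_iInf fun hE => robin_le_energy μ (hE.trans h)

lemma robin_mul_sq_le {E F : Set (Pn n)} (μ : Measure (Pn n)) [IsFiniteMeasure μ]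
    (hF : IsClosed F) (hFE : F ⊆ E) : robin E * μ F ^ 2 ≤ energy μ := by
  rcases eq_or_ne (μ F) 0 with h0 | h0
  · simp [h0]
  have := cond_isProbabilityMeasure (μ := μ) h0
  have hsupp : msupport μ[|F] ⊆ E := by
    rw [msupport_eq_support]
    refine Measure.smul_absolutelyContinuous.support_mono.trans <|
      Measure.support_restrict_subset.trans ?_
    rw [hF.closure_eq]
    exact Set.inter_subset_left.trans hFE
  calc robin E * μ F ^ 2 ≤ energy μ[|F] * μ F ^ 2 := by gcongr; exact robin_le_energy _ hsupp
    _ = energy (μ.restrict F) := by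
      rw [ProbabilityTheory.cond, energy_smul (by simpa using h0), mul_comm, ← mul_assoc,
        ← mul_pow, ENNReal.mul_inv_cancel h0 (measure_ne_top μ F), one_pow, one_mul]
    _ ≤ energy μ := energy_mono Measure.restrict_le_self

lemma iInf_robin_le_robin_iUnion {B : ℕ → Set (Pn n)} (hB : ∀ m, MeasurableSet (B m))
    (hmono : Monotone B) : ⨅ m, robin (B m) ≤ robin (⋃ m, B m) := by
  refine le_iInf₂ fun μ _ => le_iInf fun hsupp => ?_
  have key : ∀ a < 1, (⨅ m, robin (B m)) * a ^ 2 ≤ energy μ := by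
    intro a ha
    rw [← measure_eq_one_of_msupport_subset hsupp] at ha
    obtain ⟨m, F, hF, hFB, haF⟩ := μ.exists_isClosed_subset_lt_measure_iUnion hB hmono ha
    calc (⨅ m, robin (B m)) * a ^ 2 ≤ robin (B m) * μ F ^ 2 := by
          gcongr
          exact iInf_le _ m
      _ ≤ energy μ := robin_mul_sq_le μ hF hFB
  have : (𝓝[<] (1 : ℝ≥0∞)).NeBot := nhdsLT_neBot_of_exists_lt ⟨0, zero_lt_one⟩
  have hlim : Tendsto (fun a : ℝ≥0∞ => (⨅ m, robin (B m)) * a ^ 2) (𝓝[<] 1)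
      (𝓝 ((⨅ m, robin (B m)) * 1 ^ 2)) :=
    ENNReal.Tendsto.const_mul ((ENNReal.continuous_pow 2).tendsto 1 |>.mono_left
      nhdsWithin_le_nhds) (by simp)
  rw [one_pow, mul_one] at hlim
  exact le_of_tendsto hlim (eventually_nhdsWithin_of_forall key)

lemma robin_iUnion {B : ℕ → Set (Pn n)} (hB : ∀ m, MeasurableSet (B m)) (hmono : Monotone B) :
    robin (⋃ m, B m) = ⨅ m, robin (B m) :=
  le_antisymm (le_iInf fun m => robin_anti (Set.subset_iUnion B m))
    (iInf_robin_le_robin_iUnion hB hmono)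

lemma kappa_mono {E F : Set (Pn n)} (h : E ⊆ F) : kappa E ≤ kappa F := by
  simpa [kappa] using robin_anti h

lemma continuous_exp_neg_coe : Continuous fun t : ℝ≥0∞ => EReal.exp (-(t : EReal)) :=
  ENNReal.continuous_exp.comp (continuous_neg.comp continuous_coe_ennreal_ereal)

end Capacity

theorem statement11 (n : ℕ) (B : ℕ → Set (Pn n))
    (hB : ∀ m, MeasurableSet (B m)) (hmono : Monotone B) :
    Tendsto (fun m => kappa (B m)) atTop (𝓝 (kappa (⋃ m, B m))) ∧
    kappa (⋃ m, B m) = ⨆ m, kappa (B m) := by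
  have hrobin : Tendsto (fun m => robin (B m)) atTop (𝓝 (robin (⋃ m, B m))) := by
    rw [robin_iUnion hB hmono]
    exact tendsto_atTop_iInf fun i j hij => robin_anti (hmono hij)
  have hkappa : Tendsto (fun m => kappa (B m)) atTop (𝓝 (kappa (⋃ m, B m))) :=
    (continuous_exp_neg_coe.tendsto _).comp hrobin
  exact ⟨hkappa, tendsto_nhds_unique hkappa
    (tendsto_atTop_iSup fun i j hij => kappa_mono (hmono hij))⟩

end
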